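/- Under the assumptions of the renewal reward process (i.i.d. pairs (X_n, R_n), τ = E[X_1] < ∞, E[|R_1|] < ∞, r = E[R_1]), the limit inferior satisfies liminf_{t→∞} E[R(t)]/t ≥ r/τ. -/

import Mathlib

/-!
Let `M(s) = ∑ₙ P(S_n ≤ s) = E[N(s) + 1]`. Since `{S_n ≤ s}` depends only on the first `n` steps,
it is independent of `(X_n, R_n)`, so Wald's identity gives
`E[∑_{n ≤ N(s)} h(X_n, R_n)] = E[h(X_0, R_0)] M(s)` for `h ≥ 0`. With `h = x` and `h = min x a`
this yields `s / τ ≤ M(s) ≤ (s + a) / E[min X a]`. Up to time `t` the process collects the positive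
parts of the rewards of all steps with `S_n ≤ t - a` and `X_n ≤ a` (they end before `t`), and loses
at most the negative parts of the steps with `S_n ≤ t`; hence
`E[R(t)] ≥ E[R⁺; X ≤ a] (t - a) / τ - E[R⁻] (t + a) / E[min X a]`.
Divide by `t`, let `t → ∞`, then `a → ∞` (dominated convergence). The strong law is only used to
know that `S_n → ∞` a.s., so that `N(t)` is finite.
-/

open MeasureTheory ProbabilityTheory Filter

/-- Renewal epoch: `rS X n ω = X_1 + ... + X_n` (0-indexed: sum of `X 0, ..., X (n-1)`). -/
noncomputable def rS {Ω : Type*} (X : ℕ → Ω → ℝ) (n : ℕ) (ω : Ω) : ℝ :=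
  ∑ i ∈ Finset.range n, X i ω

/-- Renewal counting process: `rN X t ω = sup {n : S_n ≤ t}`. -/
noncomputable def rN {Ω : Type*} (X : ℕ → Ω → ℝ) (t : ℝ) (ω : Ω) : ℕ :=
  sSup {n | rS X n ω ≤ t}

open Finset Topology
open scoped ENNReal

section Deterministic

variable {Ω : Type*} {X : ℕ → Ω → ℝ} {ω : Ω} {t : ℝ}

lemma rS_succ (X : ℕ → Ω → ℝ) (n : ℕ) (ω : Ω) : rS X (n + 1) ω = rS X n ω + X n ω :=
  sum_range_succ _ _

lemma rS_mono (hX : ∀ n, 0 ≤ X n ω) : Monotone (rS X · ω) := fun _ _ hmn =>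
  sum_le_sum_of_subset_of_nonneg (range_subset_range.2 hmn) fun i _ _ => hX i

lemma le_rN_iff (hX : ∀ n, 0 ≤ X n ω) (hS : Tendsto (rS X · ω) atTop atTop) (ht : 0 ≤ t)
    {k : ℕ} : k ≤ rN X t ω ↔ rS X k ω ≤ t := by
  obtain ⟨m, hm⟩ := (hS.eventually_gt_atTop t).exists_forall_of_atTop
  have hbdd : BddAbove {n | rS X n ω ≤ t} :=
    ⟨m, fun n hn => le_of_not_gt fun hmn => (hm n hmn.le).not_ge hn⟩
  refine ⟨fun hk => (rS_mono hX hk).trans (Nat.sSup_mem ⟨0, ?_⟩ hbdd), fun hk => le_csSup hbdd hk⟩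
  simpa [rS] using ht

lemma lt_rS_rN_succ (hX : ∀ n, 0 ≤ X n ω) (hS : Tendsto (rS X · ω) atTop atTop) (ht : 0 ≤ t) :
    t < rS X (rN X t ω + 1) ω :=
  lt_of_not_ge fun h => (rN X t ω).lt_succ_self.not_ge ((le_rN_iff hX hS ht).2 h)

lemma abs_sum_range_le_sum_range_succ_abs (f : ℕ → ℝ) (N : ℕ) :
    |∑ n ∈ range N, f n| ≤ ∑ n ∈ range (N + 1), |f n| :=
  (abs_sum_le_sum_abs _ _).trans (sum_le_sum_of_subset_of_nonneg
    (range_subset_range.2 N.le_succ) fun _ _ _ => abs_nonneg _)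

lemma sum_range_rN_succ_min_le (hX : ∀ n, 0 ≤ X n ω) (hS : Tendsto (rS X · ω) atTop atTop)
    (ht : 0 ≤ t) (a : ℝ) : ∑ n ∈ range (rN X t ω + 1), min (X n ω) a ≤ t + a := by
  have hN : rS X (rN X t ω) ω ≤ t := (le_rN_iff hX hS ht).1 le_rfl
  rw [sum_range_succ]
  gcongr
  · exact (sum_le_sum fun n _ => min_le_left _ _).trans hN
  · exact min_le_right _ _

lemma sum_range_rN_sub_le_sum_range_rN (R : ℕ → Ω → ℝ) (hX : ∀ n, 0 ≤ X n ω)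
    (hS : Tendsto (rS X · ω) atTop atTop) {a : ℝ} (ha : 0 ≤ a) (hat : a ≤ t) :
    ∑ n ∈ range (rN X (t - a) ω + 1), (if X n ω ≤ a then max (R n ω) 0 else 0)
        - ∑ n ∈ range (rN X t ω + 1), max (-R n ω) 0
      ≤ ∑ n ∈ range (rN X t ω), R n ω := by
  have hta : 0 ≤ t - a := sub_nonneg.2 hat
  -- a short step `X n ≤ a` taken by time `t - a` is completed by time `t`
  have hpos : ∑ n ∈ range (rN X (t - a) ω + 1), (if X n ω ≤ a then max (R n ω) 0 else 0)
      ≤ ∑ n ∈ range (rN X t ω), max (R n ω) 0 := by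
    rw [← sum_filter]
    refine sum_le_sum_of_subset_of_nonneg (fun n hn => ?_) fun n _ _ => le_max_right _ _
    obtain ⟨hn, hXn⟩ := mem_filter.1 hn
    have hSn := (le_rN_iff hX hS hta).1 (Nat.lt_succ_iff.1 (mem_range.1 hn))
    refine mem_range.2 ((le_rN_iff hX hS (ha.trans hat)).2 ?_)
    rw [rS_succ]
    linarith
  have hneg : ∑ n ∈ range (rN X t ω), max (-R n ω) 0
      ≤ ∑ n ∈ range (rN X t ω + 1), max (-R n ω) 0 := by
    rw [sum_range_succ]
    exact le_add_of_nonneg_right (le_max_right _ _)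
  have hsplit : ∑ n ∈ range (rN X t ω), R n ω
      = ∑ n ∈ range (rN X t ω), max (R n ω) 0 - ∑ n ∈ range (rN X t ω), max (-R n ω) 0 := by
    rw [← sum_sub_distrib]
    simp only [max_zero_sub_max_neg_zero_eq_self]
  linarith

end Deterministic

section Measurability

variable {Ω : Type*} [MeasurableSpace Ω]

lemma Nat.le_sSup_iff_of_pos {D : Set ℕ} {k : ℕ} (hk : 0 < k) :
    k ≤ sSup D ↔ BddAbove D ∧ ∃ n ∈ D, k ≤ n := by
  by_cases hb : BddAbove D
  · rcases D.eq_empty_or_nonempty with rfl | hne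
    · simp only [csSup_empty, Nat.bot_eq_zero, Set.mem_empty_iff_false, false_and, exists_false,
        and_false, iff_false]
      omega
    · exact ⟨fun hkD => ⟨hb, _, Nat.sSup_mem hne hb, hkD⟩,
        fun ⟨_, n, hn, hkn⟩ => hkn.trans (le_csSup hb hn)⟩
  · simp only [hb, false_and, iff_false, csSup_of_not_bddAbove hb, csSup_empty, Nat.bot_eq_zero]
    omega

lemma measurableSet_bddAbove_setOf_mem {A : ℕ → Set Ω} (hA : ∀ n, MeasurableSet (A n)) :
    MeasurableSet {ω | BddAbove {n | ω ∈ A n}} := by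
  have : {ω | BddAbove {n | ω ∈ A n}} = ⋃ m, ⋂ n, ⋂ (_ : m < n), (A n)ᶜ := by
    ext ω
    simp only [bddAbove_def, Set.mem_ofPred_eq, Set.mem_iUnion, Set.mem_iInter, Set.mem_compl_iff]
    exact exists_congr fun m => ⟨fun h n hmn hn => (h n hn).not_gt hmn,
      fun h n hn => le_of_not_gt fun hmn => h n hmn hn⟩
  rw [this]
  exact .iUnion fun m => .iInter fun n => .iInter fun _ => (hA n).compl

lemma measurable_sSup_setOf_mem {A : ℕ → Set Ω} (hA : ∀ n, MeasurableSet (A n)) :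
    Measurable fun ω => sSup {n | ω ∈ A n} := by
  refine measurable_of_Ici fun k => ?_
  rcases k.eq_zero_or_pos with rfl | hk
  · simp
  have : (fun ω => sSup {n | ω ∈ A n}) ⁻¹' Set.Ici k
      = {ω | BddAbove {n | ω ∈ A n}} ∩ ⋃ n, ⋃ (_ : k ≤ n), A n := by
    ext ω
    simp only [Set.mem_preimage, Set.mem_Ici, Nat.le_sSup_iff_of_pos hk, Set.mem_inter_iff,
      Set.mem_ofPred_eq, Set.mem_iUnion, exists_prop]
    exact and_congr_right fun _ => exists_congr fun n => and_comm
  rw [this]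
  exact (measurableSet_bddAbove_setOf_mem hA).inter (.iUnion fun n => .iUnion fun _ => hA n)

lemma measurable_rS {X : ℕ → Ω → ℝ} (hX : ∀ n, Measurable (X n)) (n : ℕ) :
    Measurable (rS X n) :=
  Finset.measurable_sum _ fun i _ => hX i

lemma measurable_rN {X : ℕ → Ω → ℝ} (hX : ∀ n, Measurable (X n)) (t : ℝ) :
    Measurable (rN X t) :=
  measurable_sSup_setOf_mem fun n => measurableSet_le (measurable_rS hX n) measurable_const

lemma measurable_sum_range_of_measurable {N : Ω → ℕ} (hN : Measurable N) {Y : ℕ → Ω → ℝ}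
    (hY : ∀ n, Measurable (Y n)) : Measurable fun ω => ∑ n ∈ range (N ω), Y n ω :=
  (measurable_from_prod_countable_left (f := fun p : Ω × ℕ => ∑ n ∈ range p.2, Y n p.1)
    fun k => Finset.measurable_sum (range k) fun n _ => hY n).comp (measurable_id.prodMk hN)

end Measurability

section RenewalReward

variable {Ω : Type*} [MeasurableSpace Ω] {μ : Measure Ω}

/-- Wald's identity: `{S_n ≤ s}` depends only on `Z 0, ..., Z (n-1)`, hence is independent of
`Z n`. -/
theorem lintegral_tsum_indicator_partialSum_le {E : Type*} [MeasurableSpace E] {Z : ℕ → Ω → E}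
    (hZ : ∀ n, Measurable (Z n)) (hindep : iIndepFun Z μ)
    (hident : ∀ n, IdentDistrib (Z n) (Z 0) μ μ) {f : E → ℝ} (hf : Measurable f)
    {h : E → ℝ≥0∞} (hh : Measurable h) (s : ℝ) :
    ∫⁻ ω, ∑' n, {ω | ∑ i ∈ range n, f (Z i ω) ≤ s}.indicator (fun ω => h (Z n ω)) ω ∂μ
      = (∫⁻ ω, h (Z 0 ω) ∂μ) * ∑' n, μ {ω | ∑ i ∈ range n, f (Z i ω) ≤ s} := by
  have hA : ∀ n, MeasurableSet {ω | ∑ i ∈ range n, f (Z i ω) ≤ s} := fun n =>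
    measurableSet_le (Finset.measurable_sum _ fun i _ => hf.comp (hZ i)) measurable_const
  have hmeas : ∀ n, Measurable fun ω => {ω | ∑ i ∈ range n, f (Z i ω) ≤ s}.indicator
      (fun ω => h (Z n ω)) ω := fun n => (hh.comp (hZ n)).indicator (hA n)
  rw [lintegral_tsum fun n => (hmeas n).aemeasurable, ← ENNReal.tsum_mul_left]
  refine tsum_congr fun n => ?_
  have hind : IndepFun (fun ω => h (Z n ω))
      (fun ω => {ω | ∑ i ∈ range n, f (Z i ω) ≤ s}.indicator (1 : Ω → ℝ≥0∞) ω) μ := by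
    have hφ : Measurable fun v : ({n} : Finset ℕ) → E => h (v ⟨n, mem_singleton_self n⟩) :=
      hh.comp (measurable_pi_apply _)
    have hψ : Measurable fun v : range n → E =>
        {v : range n → E | ∑ i, f (v i) ≤ s}.indicator (1 : (range n → E) → ℝ≥0∞) v :=
      measurable_one.indicator (measurableSet_le (Finset.measurable_sum _ fun i _ =>
        hf.comp (measurable_pi_apply i)) measurable_const)
    convert (hindep.indepFun_finset {n} (range n) (by simp) hZ).comp hφ hψ using 1
    · rfl
    funext ω
    simp only [Function.comp_apply, Set.indicator_apply, Set.mem_ofPred_eq, Pi.one_apply,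
      sum_coe_sort (range n) fun i => f (Z i ω)]
  calc ∫⁻ ω, {ω | ∑ i ∈ range n, f (Z i ω) ≤ s}.indicator (fun ω => h (Z n ω)) ω ∂μ
      = ∫⁻ ω, h (Z n ω) * {ω | ∑ i ∈ range n, f (Z i ω) ≤ s}.indicator 1 ω ∂μ := by
        simp only [Set.indicator_apply, Pi.one_apply, mul_ite, mul_one, mul_zero]
    _ = (∫⁻ ω, h (Z n ω) ∂μ) * μ {ω | ∑ i ∈ range n, f (Z i ω) ≤ s} := by
        rw [← lintegral_indicator_one (hA n)]
        exact lintegral_mul_eq_lintegral_mul_lintegral_of_indepFun''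
          (hh.comp (hZ n)).aemeasurable (measurable_one.indicator (hA n)).aemeasurable hind
    _ = (∫⁻ ω, h (Z 0 ω) ∂μ) * μ {ω | ∑ i ∈ range n, f (Z i ω) ≤ s} := by
        congr 1
        exact ((hident n).comp hh).lintegral_eq

lemma integral_pos_of_forall_pos [NeZero μ] {f : Ω → ℝ} (hf : ∀ ω, 0 < f ω)
    (hfi : Integrable f μ) : 0 < ∫ ω, f ω ∂μ := by
  have hsupp : Function.support f = Set.univ := Set.eq_univ_of_forall fun ω => (hf ω).ne'
  rw [integral_pos_iff_support_of_nonneg (fun ω => (hf ω).le) hfi, hsupp]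
  exact Measure.measure_univ_pos.2 (NeZero.ne μ)

structure IsRenewalReward (μ : Measure Ω) (X R : ℕ → Ω → ℝ) : Prop where
  measurable : ∀ n, Measurable fun ω => (X n ω, R n ω)
  indep : iIndepFun (fun n ω => (X n ω, R n ω)) μ
  identDistrib : ∀ n, IdentDistrib (fun ω => (X n ω, R n ω)) (fun ω => (X 0 ω, R 0 ω)) μ μ
  pos : ∀ n ω, 0 < X n ω
  integrable_X : Integrable (X 0) μ
  integrable_R : Integrable (R 0) μ

/-- This is `E[N(s) + 1]` as soon as `s ≥ 0` and `S_n → ∞` almost surely. -/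
noncomputable def renewalFunction (μ : Measure Ω) (X : ℕ → Ω → ℝ) (s : ℝ) : ℝ≥0∞ :=
  ∑' n, μ {ω | rS X n ω ≤ s}

namespace IsRenewalReward

variable {X R : ℕ → Ω → ℝ}

theorem measurable_X (hP : IsRenewalReward μ X R) (n : ℕ) : Measurable (X n) :=
  measurable_fst.comp (hP.measurable n)

theorem measurable_R (hP : IsRenewalReward μ X R) (n : ℕ) : Measurable (R n) :=
  measurable_snd.comp (hP.measurable n)

theorem integrable_min_X (hP : IsRenewalReward μ X R) {a : ℝ} (ha : 0 ≤ a) :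
    Integrable (fun ω => min (X 0 ω) a) μ := by
  refine hP.integrable_X.mono ((hP.measurable_X 0).min measurable_const).aestronglyMeasurable
    (ae_of_all _ fun ω => ?_)
  rw [Real.norm_of_nonneg (le_min (hP.pos 0 ω).le ha), Real.norm_of_nonneg (hP.pos 0 ω).le]
  exact min_le_left _ _

theorem ae_tendsto_rS_atTop [NeZero μ] (hP : IsRenewalReward μ X R) :
    ∀ᵐ ω ∂μ, Tendsto (rS X · ω) atTop atTop := by
  have hτ : 0 < μ[X 0] := integral_pos_of_forall_pos (hP.pos 0) hP.integrable_X
  filter_upwards [strong_law_ae_real X hP.integrable_X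
    (fun i j hij => (hP.indep.indepFun hij).comp measurable_fst measurable_fst)
    fun i => (hP.identDistrib i).comp measurable_fst] with ω hω
  refine (hω.pos_mul_atTop hτ tendsto_natCast_atTop_atTop).congr' ?_
  filter_upwards [eventually_ne_atTop 0] with n hn
  rw [div_mul_cancel₀ _ (Nat.cast_ne_zero.2 hn)]
  rfl

theorem lintegral_tsum_indicator (hP : IsRenewalReward μ X R) {h : ℝ × ℝ → ℝ≥0∞}
    (hh : Measurable h) (s : ℝ) :
    ∫⁻ ω, ∑' n, {ω | rS X n ω ≤ s}.indicator (fun ω => h (X n ω, R n ω)) ω ∂μ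
      = (∫⁻ ω, h (X 0 ω, R 0 ω) ∂μ) * renewalFunction μ X s :=
  lintegral_tsum_indicator_partialSum_le hP.measurable hP.indep hP.identDistrib measurable_fst hh s

theorem lintegral_ofReal_sum_range_rN_succ [NeZero μ] (hP : IsRenewalReward μ X R)
    {g : ℝ × ℝ → ℝ} (hg : Measurable g) (hg0 : ∀ n ω, 0 ≤ g (X n ω, R n ω)) {s : ℝ}
    (hs : 0 ≤ s) :
    ∫⁻ ω, ENNReal.ofReal (∑ n ∈ range (rN X s ω + 1), g (X n ω, R n ω)) ∂μ
      = (∫⁻ ω, ENNReal.ofReal (g (X 0 ω, R 0 ω)) ∂μ) * renewalFunction μ X s := by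
  rw [← hP.lintegral_tsum_indicator hg.ennreal_ofReal s]
  refine lintegral_congr_ae ?_
  filter_upwards [hP.ae_tendsto_rS_atTop] with ω hω
  have hN := fun k => le_rN_iff (k := k) (fun n => (hP.pos n ω).le) hω hs
  rw [ENNReal.ofReal_sum_of_nonneg fun n _ => hg0 n ω, tsum_eq_sum (s := range (rN X s ω + 1))]
  · refine sum_congr rfl fun n hn => ?_
    have hmem : ω ∈ {ω | rS X n ω ≤ s} := (hN n).1 (Nat.lt_succ_iff.1 (mem_range.1 hn))
    rw [Set.indicator_of_mem hmem]
  · intro n hn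
    have hmem : ω ∉ {ω | rS X n ω ≤ s} := fun h =>
      hn (mem_range.2 (Nat.lt_succ_of_le ((hN n).2 h)))
    rw [Set.indicator_of_notMem hmem]

theorem ofReal_integral_min_mul_renewalFunction_le [IsProbabilityMeasure μ]
    (hP : IsRenewalReward μ X R) {a t : ℝ} (ha : 0 ≤ a) (ht : 0 ≤ t) :
    ENNReal.ofReal (∫ ω, min (X 0 ω) a ∂μ) * renewalFunction μ X t ≤ ENNReal.ofReal (t + a) := by
  have hg0 : ∀ n ω, 0 ≤ min (X n ω) a := fun n ω => le_min (hP.pos n ω).le ha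
  calc ENNReal.ofReal (∫ ω, min (X 0 ω) a ∂μ) * renewalFunction μ X t
      = ∫⁻ ω, ENNReal.ofReal (∑ n ∈ range (rN X t ω + 1), min (X n ω) a) ∂μ := by
        rw [ofReal_integral_eq_lintegral_ofReal (hP.integrable_min_X ha) (ae_of_all _ (hg0 0))]
        exact (hP.lintegral_ofReal_sum_range_rN_succ (g := fun q => min q.1 a)
          (measurable_fst.min measurable_const) hg0 ht).symm
    _ ≤ ∫⁻ _, ENNReal.ofReal (t + a) ∂μ := by
        refine lintegral_mono_ae ?_
        filter_upwards [hP.ae_tendsto_rS_atTop] with ω hω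
        exact ENNReal.ofReal_le_ofReal
          (sum_range_rN_succ_min_le (fun n => (hP.pos n ω).le) hω ht a)
    _ = ENNReal.ofReal (t + a) := by simp

theorem integral_min_pos [NeZero μ] (hP : IsRenewalReward μ X R) {a : ℝ} (ha : 0 < a) :
    0 < ∫ ω, min (X 0 ω) a ∂μ :=
  integral_pos_of_forall_pos (fun ω => lt_min (hP.pos 0 ω) ha) (hP.integrable_min_X ha.le)

theorem renewalFunction_ne_top [IsProbabilityMeasure μ] (hP : IsRenewalReward μ X R) {t : ℝ}
    (ht : 0 ≤ t) : renewalFunction μ X t ≠ ⊤ := by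
  intro htop
  have h := hP.ofReal_integral_min_mul_renewalFunction_le zero_le_one ht
  rw [htop, ENNReal.mul_top (ENNReal.ofReal_pos.2 (hP.integral_min_pos one_pos)).ne',
    top_le_iff] at h
  exact ENNReal.ofReal_ne_top h

theorem toReal_renewalFunction_le [IsProbabilityMeasure μ] (hP : IsRenewalReward μ X R)
    {a t : ℝ} (ha : 0 < a) (ht : 0 ≤ t) :
    (renewalFunction μ X t).toReal ≤ (t + a) / ∫ ω, min (X 0 ω) a ∂μ := by
  have h := ENNReal.toReal_mono ENNReal.ofReal_ne_top
    (hP.ofReal_integral_min_mul_renewalFunction_le ha.le ht)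
  rwa [ENNReal.toReal_mul, ENNReal.toReal_ofReal (hP.integral_min_pos ha).le,
    ENNReal.toReal_ofReal (by linarith), ← le_div_iff₀' (hP.integral_min_pos ha)] at h

theorem integrable_sum_range_rN_succ [IsProbabilityMeasure μ] (hP : IsRenewalReward μ X R)
    {g : ℝ × ℝ → ℝ} (hg : Measurable g) (hg0 : ∀ n ω, 0 ≤ g (X n ω, R n ω))
    (hgi : Integrable (fun ω => g (X 0 ω, R 0 ω)) μ) {s : ℝ} (hs : 0 ≤ s) :
    Integrable (fun ω => ∑ n ∈ range (rN X s ω + 1), g (X n ω, R n ω)) μ := by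
  refine ⟨(measurable_sum_range_of_measurable ((measurable_rN hP.measurable_X s).add_const 1)
    fun n => hg.comp (hP.measurable n)).aestronglyMeasurable, ?_⟩
  rw [hasFiniteIntegral_iff_ofReal (ae_of_all _ fun ω => sum_nonneg fun n _ => hg0 n ω),
    hP.lintegral_ofReal_sum_range_rN_succ hg hg0 hs]
  exact ENNReal.mul_lt_top hgi.lintegral_lt_top (hP.renewalFunction_ne_top hs).lt_top

theorem integral_sum_range_rN_succ [IsProbabilityMeasure μ] (hP : IsRenewalReward μ X R)
    {g : ℝ × ℝ → ℝ} (hg : Measurable g) (hg0 : ∀ n ω, 0 ≤ g (X n ω, R n ω))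
    (hgi : Integrable (fun ω => g (X 0 ω, R 0 ω)) μ) {s : ℝ} (hs : 0 ≤ s) :
    ∫ ω, ∑ n ∈ range (rN X s ω + 1), g (X n ω, R n ω) ∂μ
      = (∫ ω, g (X 0 ω, R 0 ω) ∂μ) * (renewalFunction μ X s).toReal := by
  rw [integral_eq_lintegral_of_nonneg_ae (ae_of_all _ fun ω => sum_nonneg fun n _ => hg0 n ω)
      (hP.integrable_sum_range_rN_succ hg hg0 hgi hs).aestronglyMeasurable,
    hP.lintegral_ofReal_sum_range_rN_succ hg hg0 hs, ENNReal.toReal_mul,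
    ← ofReal_integral_eq_lintegral_ofReal hgi (ae_of_all _ (hg0 0)),
    ENNReal.toReal_ofReal (integral_nonneg (hg0 0))]

theorem div_le_toReal_renewalFunction [IsProbabilityMeasure μ] (hP : IsRenewalReward μ X R)
    {s : ℝ} (hs : 0 ≤ s) : s / μ[X 0] ≤ (renewalFunction μ X s).toReal := by
  have hX0 : ∀ n ω, 0 ≤ X n ω := fun n ω => (hP.pos n ω).le
  rw [div_le_iff₀' (integral_pos_of_forall_pos (hP.pos 0) hP.integrable_X)]
  calc s = ∫ _, s ∂μ := by simp
    _ ≤ ∫ ω, ∑ n ∈ range (rN X s ω + 1), X n ω ∂μ := by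
        refine integral_mono_ae (integrable_const s)
          (hP.integrable_sum_range_rN_succ (g := Prod.fst) measurable_fst hX0 hP.integrable_X hs) ?_
        filter_upwards [hP.ae_tendsto_rS_atTop] with ω hω
        exact (lt_rS_rN_succ (hX0 · ω) hω hs).le
    _ = μ[X 0] * (renewalFunction μ X s).toReal :=
        hP.integral_sum_range_rN_succ (g := Prod.fst) measurable_fst hX0 hP.integrable_X hs

theorem integrable_reward [IsProbabilityMeasure μ] (hP : IsRenewalReward μ X R) {t : ℝ}
    (ht : 0 ≤ t) : Integrable (fun ω => ∑ n ∈ range (rN X t ω), R n ω) μ := by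
  refine (hP.integrable_sum_range_rN_succ (g := fun q => |q.2|) measurable_snd.abs
    (fun n ω => abs_nonneg _) hP.integrable_R.abs ht).mono
    (measurable_sum_range_of_measurable (measurable_rN hP.measurable_X t)
      hP.measurable_R).aestronglyMeasurable (ae_of_all _ fun ω => ?_)
  rw [Real.norm_eq_abs, Real.norm_of_nonneg (sum_nonneg fun n _ => abs_nonneg _)]
  exact abs_sum_range_le_sum_range_succ_abs (R · ω) _

theorem integral_reward_le_mul_renewalFunction [IsProbabilityMeasure μ]
    (hP : IsRenewalReward μ X R) {t : ℝ} (ht : 0 ≤ t) :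
    ∫ ω, ∑ n ∈ range (rN X t ω), R n ω ∂μ
      ≤ (∫ ω, |R 0 ω| ∂μ) * (renewalFunction μ X t).toReal := by
  rw [← hP.integral_sum_range_rN_succ (g := fun q => |q.2|) measurable_snd.abs
    (fun n ω => abs_nonneg _) hP.integrable_R.abs ht]
  exact integral_mono (hP.integrable_reward ht) (hP.integrable_sum_range_rN_succ
    (g := fun q => |q.2|) measurable_snd.abs (fun n ω => abs_nonneg _) hP.integrable_R.abs ht)
    fun ω => (le_abs_self _).trans (abs_sum_range_le_sum_range_succ_abs (R · ω) _)

theorem sub_le_integral_reward [IsProbabilityMeasure μ] (hP : IsRenewalReward μ X R)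
    {a t : ℝ} (ha : 0 ≤ a) (hat : a ≤ t) :
    (∫ ω, (if X 0 ω ≤ a then max (R 0 ω) 0 else 0) ∂μ) * (renewalFunction μ X (t - a)).toReal
        - (∫ ω, max (-R 0 ω) 0 ∂μ) * (renewalFunction μ X t).toReal
      ≤ ∫ ω, ∑ n ∈ range (rN X t ω), R n ω ∂μ := by
  have hg₁ : Measurable fun q : ℝ × ℝ => if q.1 ≤ a then max q.2 0 else 0 :=
    Measurable.ite (measurableSet_le measurable_fst measurable_const)
      (measurable_snd.max measurable_const) measurable_const
  have hg₁0 : ∀ n ω, 0 ≤ if X n ω ≤ a then max (R n ω) 0 else 0 := fun n ω =>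
    ite_nonneg (le_max_right _ _) le_rfl
  have hg₁i : Integrable (fun ω => if X 0 ω ≤ a then max (R 0 ω) 0 else 0) μ := by
    refine hP.integrable_R.pos_part.mono (hg₁.comp (hP.measurable 0)).aestronglyMeasurable
      (ae_of_all _ fun ω => ?_)
    rw [Real.norm_of_nonneg (hg₁0 0 ω), Real.norm_of_nonneg (le_max_right _ _)]
    split_ifs
    exacts [le_rfl, le_max_right _ _]
  have hg₂ : Measurable fun q : ℝ × ℝ => max (-q.2) 0 := measurable_snd.neg.max measurable_const
  have hg₂0 : ∀ n ω, 0 ≤ max (-R n ω) 0 := fun n ω => le_max_right _ _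
  have hta : 0 ≤ t - a := sub_nonneg.2 hat
  have ht : 0 ≤ t := ha.trans hat
  have hI₁ := hP.integrable_sum_range_rN_succ hg₁ hg₁0 hg₁i hta
  have hI₂ := hP.integrable_sum_range_rN_succ hg₂ hg₂0 hP.integrable_R.neg_part ht
  rw [← hP.integral_sum_range_rN_succ hg₁ hg₁0 hg₁i hta,
    ← hP.integral_sum_range_rN_succ hg₂ hg₂0 hP.integrable_R.neg_part ht,
    ← integral_sub hI₁ hI₂]
  refine integral_mono_ae (hI₁.sub hI₂) (hP.integrable_reward ht) ?_
  filter_upwards [hP.ae_tendsto_rS_atTop] with ω hω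
  exact sum_range_rN_sub_le_sum_range_rN R (fun n => (hP.pos n ω).le) hω ha hat

theorem le_integral_reward [IsProbabilityMeasure μ] (hP : IsRenewalReward μ X R) {a t : ℝ}
    (ha : 0 < a) (hat : a ≤ t) :
    (∫ ω, (if X 0 ω ≤ a then max (R 0 ω) 0 else 0) ∂μ) * (t - a) / μ[X 0]
        - (∫ ω, max (-R 0 ω) 0 ∂μ) * (t + a) / ∫ ω, min (X 0 ω) a ∂μ
      ≤ ∫ ω, ∑ n ∈ range (rN X t ω), R n ω ∂μ := by
  have hA : 0 ≤ ∫ ω, (if X 0 ω ≤ a then max (R 0 ω) 0 else 0) ∂μ :=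
    integral_nonneg fun ω => ite_nonneg (le_max_right _ _) le_rfl
  have hB : 0 ≤ ∫ ω, max (-R 0 ω) 0 ∂μ := integral_nonneg fun ω => le_max_right _ _
  rw [mul_div_assoc, mul_div_assoc]
  exact (sub_le_sub
    (mul_le_mul_of_nonneg_left (hP.div_le_toReal_renewalFunction (sub_nonneg.2 hat)) hA)
    (mul_le_mul_of_nonneg_left (hP.toReal_renewalFunction_le ha (ha.le.trans hat)) hB)).trans
    (hP.sub_le_integral_reward ha.le hat)

theorem integral_reward_le [IsProbabilityMeasure μ] (hP : IsRenewalReward μ X R) {a t : ℝ}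
    (ha : 0 < a) (ht : 0 ≤ t) :
    ∫ ω, ∑ n ∈ range (rN X t ω), R n ω ∂μ
      ≤ (∫ ω, |R 0 ω| ∂μ) * (t + a) / ∫ ω, min (X 0 ω) a ∂μ := by
  rw [mul_div_assoc]
  exact (hP.integral_reward_le_mul_renewalFunction ht).trans (mul_le_mul_of_nonneg_left
    (hP.toReal_renewalFunction_le ha ht) (integral_nonneg fun ω => abs_nonneg _))

theorem le_liminf_integral_reward_div [IsProbabilityMeasure μ] (hP : IsRenewalReward μ X R)
    {a : ℝ} (ha : 0 < a) :
    (∫ ω, (if X 0 ω ≤ a then max (R 0 ω) 0 else 0) ∂μ) / μ[X 0]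
        - (∫ ω, max (-R 0 ω) 0 ∂μ) / ∫ ω, min (X 0 ω) a ∂μ
      ≤ liminf (fun t => (∫ ω, ∑ n ∈ range (rN X t ω), R n ω ∂μ) / t) atTop := by
  set A := ∫ ω, (if X 0 ω ≤ a then max (R 0 ω) 0 else 0) ∂μ
  set B := ∫ ω, max (-R 0 ω) 0 ∂μ
  set C := ∫ ω, |R 0 ω| ∂μ
  set τ := μ[X 0]
  set τₐ := ∫ ω, min (X 0 ω) a ∂μ
  have hratio : ∀ c : ℝ, Tendsto (fun t : ℝ => (t + c) / t) atTop (𝓝 1) := fun c => by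
    have h := (tendsto_const_nhds (x := (1 : ℝ))).add
      ((tendsto_const_nhds (x := c)).div_atTop tendsto_id)
    rw [add_zero] at h
    refine h.congr' ((eventually_ne_atTop 0).mono fun t ht => ?_)
    simp [add_div, div_self ht]
  have hlower : Tendsto (fun t => (A * (t - a) / τ - B * (t + a) / τₐ) / t) atTop
      (𝓝 (A / τ - B / τₐ)) := by
    have h := ((hratio (-a)).const_mul (A / τ)).sub ((hratio a).const_mul (B / τₐ))
    rw [mul_one, mul_one] at h
    exact h.congr fun t => by ring
  have hupper : Tendsto (fun t => C * (t + a) / τₐ / t) atTop (𝓝 (C / τₐ)) := by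
    have h := (hratio a).const_mul (C / τₐ)
    rw [mul_one] at h
    exact h.congr fun t => by ring
  have hbdd : IsCoboundedUnder (· ≥ ·) atTop
      (fun t => (∫ ω, ∑ n ∈ range (rN X t ω), R n ω ∂μ) / t) := by
    refine (hupper.isBoundedUnder_le.mono_le ?_).isCoboundedUnder_ge
    filter_upwards [eventually_gt_atTop 0] with t ht
    exact div_le_div_of_nonneg_right (hP.integral_reward_le ha ht.le) ht.le
  rw [← hlower.liminf_eq]
  refine liminf_le_liminf ?_ hlower.isBoundedUnder_ge hbdd
  filter_upwards [eventually_ge_atTop a] with t hat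
  exact div_le_div_of_nonneg_right (hP.le_integral_reward ha hat) (ha.le.trans hat)

theorem tendsto_truncated_lower_bound [IsProbabilityMeasure μ] (hP : IsRenewalReward μ X R) :
    Tendsto (fun a => (∫ ω, (if X 0 ω ≤ a then max (R 0 ω) 0 else 0) ∂μ) / μ[X 0]
        - (∫ ω, max (-R 0 ω) 0 ∂μ) / ∫ ω, min (X 0 ω) a ∂μ) atTop
      (𝓝 (μ[R 0] / μ[X 0])) := by
  have hA : Tendsto (fun a => ∫ ω, (if X 0 ω ≤ a then max (R 0 ω) 0 else 0) ∂μ) atTop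
      (𝓝 (∫ ω, max (R 0 ω) 0 ∂μ)) := by
    refine tendsto_integral_filter_of_dominated_convergence (fun ω => |R 0 ω|)
      (.of_forall fun a => (Measurable.ite (measurableSet_le (hP.measurable_X 0) measurable_const)
        ((hP.measurable_R 0).max measurable_const) measurable_const).aestronglyMeasurable)
      (.of_forall fun a => ae_of_all _ fun ω => ?_) hP.integrable_R.abs
      (ae_of_all _ fun ω => tendsto_const_nhds.congr'
        ((eventually_ge_atTop (X 0 ω)).mono fun a ha => (if_pos ha).symm))
    split_ifs
    · rw [Real.norm_of_nonneg (le_max_right _ _)]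
      exact max_le (le_abs_self _) (abs_nonneg _)
    · simp
  have hτ : Tendsto (fun a => ∫ ω, min (X 0 ω) a ∂μ) atTop (𝓝 (μ[X 0])) := by
    refine tendsto_integral_filter_of_dominated_convergence (X 0)
      (.of_forall fun a => ((hP.measurable_X 0).min measurable_const).aestronglyMeasurable)
      ((eventually_ge_atTop 0).mono fun a ha => ae_of_all _ fun ω => ?_) hP.integrable_X
      (ae_of_all _ fun ω => tendsto_const_nhds.congr'
        ((eventually_ge_atTop (X 0 ω)).mono fun a ha => (min_eq_left ha).symm))
    rw [Real.norm_of_nonneg (le_min (hP.pos 0 ω).le ha)]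
    exact min_le_left _ _
  have hR : μ[R 0] = ∫ ω, max (R 0 ω) 0 ∂μ - ∫ ω, max (-R 0 ω) 0 ∂μ := by
    rw [← integral_sub hP.integrable_R.pos_part hP.integrable_R.neg_part]
    simp only [max_zero_sub_max_neg_zero_eq_self]
  rw [hR, sub_div]
  exact (hA.div_const _).sub (tendsto_const_nhds.div hτ
    (integral_pos_of_forall_pos (hP.pos 0) hP.integrable_X).ne')

end IsRenewalReward

end RenewalReward

/-- Lower-bound half of the expected-reward renewal theorem (via Fatou). -/
theorem renewal_reward_liminf
    {Ω : Type*} [MeasurableSpace Ω] (μ : Measure Ω) [IsProbabilityMeasure μ]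
    (X R : ℕ → Ω → ℝ)
    (hmeas : ∀ n, Measurable fun ω => (X n ω, R n ω))
    (hindep : iIndepFun (fun n ω => (X n ω, R n ω)) μ)
    (hident : ∀ n, IdentDistrib (fun ω => (X n ω, R n ω)) (fun ω => (X 0 ω, R 0 ω)) μ μ)
    (hpos : ∀ n ω, 0 < X n ω)
    (hXint : Integrable (X 0) μ) (hRint : Integrable (R 0) μ)
    (τ r : ℝ) (hτ : μ[X 0] = τ) (hr : μ[R 0] = r) :
    r / τ ≤ Filter.liminf (fun t : ℝ =>
      (∫ ω, (∑ n ∈ Finset.range (rN X t ω), R n ω) ∂μ) / t) atTop := by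
  subst hτ hr
  have hP : IsRenewalReward μ X R := ⟨hmeas, hindep, hident, hpos, hXint, hRint⟩
  exact le_of_tendsto hP.tendsto_truncated_lower_bound
    ((eventually_gt_atTop 0).mono fun a ha => hP.le_liminf_integral_reward_div ha)
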